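/- arXiv:1806.03332 — 2 statements merged into one kernel-verified Lean document; each statement's English description precedes it below -/
import Mathlib

section
/- Let 𝒳, 𝒴 be nonempty finite sets, let W be a channel from 𝒳 to 𝒴, and let 1 < α ≤ β < ∞. Then sup over probability mass functions Q on 𝒳 of I_α^S(Q,W) is at most sup over probability mass functions Q on 𝒳 of I_β^S(Q,W); that is, the maximal α-leakage is monotonically non-decreasing in α. -/
open Real BigOperators

/-- A probability mass function on a finite set: nonnegative and sums to 1. -/
def IsPMF {X : Type} [Fintype X] (P : X → ℝ) : Prop :=
  (∀ x, 0 ≤ P x) ∧ ∑ x, P x = 1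

/-- Sibson mutual information of order α of input pmf `Q` and channel `W`. -/
noncomputable def sibsonMI (α : ℝ) {X Y : Type} [Fintype X] [Fintype Y]
    (Q : X → ℝ) (W : X → Y → ℝ) : ℝ :=
  (α / (α - 1)) * Real.log (∑ y, (∑ x, Q x * W x y ^ α) ^ (1 / α))

/-- Maximal α-leakage of a channel `W`. -/
noncomputable def maxAlphaLeakage (α : ℝ) {X Y : Type} [Fintype X] [Fintype Y]
    (W : X → Y → ℝ) : ℝ :=
  sSup {v : ℝ | ∃ Q : X → ℝ, IsPMF Q ∧ v = sibsonMI α Q W}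

/-! For a fixed input `Q` and any output distribution `r`, Hölder's inequality gives
`exp ((α - 1) / α · I_α(Q, W)) ≤ (∑_y r_y ^ (1 - α) ∑_x Q_x W_{xy} ^ α) ^ (1 / α)`, i.e. Sibson's
information is at most the Rényi divergence `D_α(Q ∘ W ‖ Q × r)`, with equality for the tilted
output distribution `r_y ∝ (∑_x Q_x W_{xy} ^ α) ^ (1 / α)`. Choosing `r` optimal for order `β` and
using that Rényi divergence is non-decreasing in its order (the power mean inequality for the
ratio `W / r` under the joint law) gives `I_α(Q, W) ≤ I_β(Q, W)` for every `Q`; taking suprema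
finishes the proof. -/

open Finset

theorem IsPMF.le_one {X : Type} [Fintype X] {P : X → ℝ} (hP : IsPMF P) (x : X) : P x ≤ 1 :=
  hP.2 ▸ single_le_sum (fun i _ => hP.1 i) (mem_univ x)

theorem IsPMF.exists_pos {X : Type} [Fintype X] {P : X → ℝ} (hP : IsPMF P) : ∃ x, 0 < P x := by
  by_contra! h
  have : ∑ x, P x ≤ 0 := sum_nonpos fun x _ => h x
  linarith [hP.2]

theorem sum_rpow_one_div_rpow_le {ι : Type} [Fintype ι] {α : ℝ} (hα : 1 ≤ α) {a r : ι → ℝ}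
    (ha : ∀ i, 0 ≤ a i) (hr : IsPMF r) (hsupp : ∀ i, r i = 0 → a i = 0) :
    (∑ i, a i ^ (1 / α)) ^ α ≤ ∑ i, r i ^ (1 - α) * a i := by
  have hα0 : α ≠ 0 := by positivity
  have holder := inner_le_weight_mul_Lp_of_nonneg univ hα r (fun i => a i ^ (1 / α) / r i) hr.1
    fun i => div_nonneg (rpow_nonneg (ha i) _) (hr.1 i)
  have hlin : ∀ i, r i * (a i ^ (1 / α) / r i) = a i ^ (1 / α) := by
    intro i
    rcases (hr.1 i).eq_or_lt with h | h
    · simp [← h, hsupp i h.symm, hα0]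
    · field_simp
  have hpow : ∀ i, r i * (a i ^ (1 / α) / r i) ^ α = r i ^ (1 - α) * a i := by
    intro i
    rcases (hr.1 i).eq_or_lt with h | h
    · simp [← h, hsupp i h.symm]
    · rw [div_rpow (rpow_nonneg (ha i) _) h.le, ← rpow_mul (ha i), one_div_mul_cancel hα0,
        rpow_one, rpow_sub h, rpow_one]
      field_simp
  simp only [hlin, hpow, hr.2, one_rpow, one_mul] at holder
  have hT : 0 ≤ ∑ i, r i ^ (1 - α) * a i :=
    sum_nonneg fun i _ => mul_nonneg (rpow_nonneg (hr.1 i) _) (ha i)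
  calc (∑ i, a i ^ (1 / α)) ^ α ≤ ((∑ i, r i ^ (1 - α) * a i) ^ α⁻¹) ^ α :=
        rpow_le_rpow (sum_nonneg fun i _ => rpow_nonneg (ha i) _) holder (by linarith)
    _ = ∑ i, r i ^ (1 - α) * a i := by rw [← rpow_mul hT, inv_mul_cancel₀ hα0, rpow_one]

theorem sum_div_rpow_one_sub_mul_eq {ι : Type} [Fintype ι] {β : ℝ} (hβ : β ≠ 0) {a : ι → ℝ}
    (ha : ∀ i, 0 ≤ a i) (hS : 0 < ∑ i, a i ^ (1 / β)) :
    ∑ i, (a i ^ (1 / β) / ∑ j, a j ^ (1 / β)) ^ (1 - β) * a i = (∑ i, a i ^ (1 / β)) ^ β := by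
  set S := ∑ i, a i ^ (1 / β)
  have hterm : ∀ i, (a i ^ (1 / β) / S) ^ (1 - β) * a i = S ^ (β - 1) * a i ^ (1 / β) := by
    intro i
    rcases (ha i).eq_or_lt with h | h
    · simp [← h, hβ]
    · rw [div_rpow (rpow_nonneg (ha i) _) hS.le, ← rpow_mul (ha i), div_mul_eq_mul_div,
        ← rpow_add_one h.ne', div_eq_mul_inv, ← rpow_neg hS.le, neg_sub, mul_comm]
      congr 2
      field_simp
      ring
  rw [sum_congr rfl fun i _ => hterm i, ← mul_sum, rpow_sub_one hS.ne', div_mul_cancel₀ _ hS.ne']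

theorem rpow_sum_mul_rpow_le {ι : Type} [Fintype ι] {w z : ι → ℝ} (hw : IsPMF w)
    (hz : ∀ i, 0 ≤ z i) {s t : ℝ} (hs : 0 < s) (hst : s ≤ t) :
    (∑ i, w i * z i ^ s) ^ (1 / s) ≤ (∑ i, w i * z i ^ t) ^ (1 / t) := by
  have ht : 0 < t := hs.trans_le hst
  have jensen := rpow_arith_mean_le_arith_mean_rpow univ w (fun i => z i ^ s) (fun i _ => hw.1 i)
    hw.2 (fun i _ => rpow_nonneg (hz i) s) ((one_le_div hs).2 hst)
  simp only [← rpow_mul (hz _), mul_div_cancel₀ t hs.ne'] at jensen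
  have hM : 0 ≤ ∑ i, w i * z i ^ s :=
    sum_nonneg fun i _ => mul_nonneg (hw.1 i) (rpow_nonneg (hz i) s)
  calc (∑ i, w i * z i ^ s) ^ (1 / s) = ((∑ i, w i * z i ^ s) ^ (t / s)) ^ (1 / t) := by
        rw [← rpow_mul hM]; field_simp
    _ ≤ (∑ i, w i * z i ^ t) ^ (1 / t) :=
        rpow_le_rpow (rpow_nonneg hM _) jensen (by positivity)

theorem rpow_one_sub_mul_rpow_eq {r w γ : ℝ} (hr : 0 ≤ r) (hw : 0 ≤ w) (hγ0 : γ ≠ 0)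
    (hγ1 : γ ≠ 1) :
    r ^ (1 - γ) * w ^ γ = w * (w / r) ^ (γ - 1) := by
  rcases hr.eq_or_lt with rfl | hr
  · simp [zero_rpow (sub_ne_zero.2 hγ1.symm), zero_rpow (sub_ne_zero.2 hγ1)]
  rcases hw.eq_or_lt with rfl | hw
  · simp [zero_rpow hγ0]
  rw [div_rpow hw.le hr.le, rpow_sub hr, rpow_sub_one hw.ne', rpow_sub_one hr.ne', rpow_one]
  field_simp

theorem sum_mul_rpow_eq_zero_iff {X : Type} [Fintype X] {q w : X → ℝ} {γ : ℝ}
    (hq : ∀ x, 0 ≤ q x) (hw : ∀ x, 0 ≤ w x) (hγ : 0 < γ) :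
    ∑ x, q x * w x ^ γ = 0 ↔ ∀ x, q x * w x = 0 := by
  rw [sum_eq_zero_iff_of_nonneg fun x _ => mul_nonneg (hq x) (rpow_nonneg (hw x) γ)]
  simp [rpow_eq_zero (hw _) hγ.ne']

section Channel

variable {X Y : Type} [Fintype X] [Fintype Y] {Q : X → ℝ} {W : X → Y → ℝ}

theorem IsPMF.joint (hQ : IsPMF Q) (hW : ∀ x, IsPMF (W x)) :
    IsPMF fun p : X × Y => Q p.1 * W p.1 p.2 :=
  ⟨fun p => mul_nonneg (hQ.1 p.1) ((hW p.1).1 p.2), by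
    simp [Fintype.sum_prod_type, ← mul_sum, (hW _).2, hQ.2]⟩

theorem sum_rpow_sum_mul_rpow_pos (hQ : IsPMF Q) (hW : ∀ x, IsPMF (W x)) (γ : ℝ) :
    0 < ∑ y, (∑ x, Q x * W x y ^ γ) ^ (1 / γ) := by
  have hA : ∀ y, 0 ≤ ∑ x, Q x * W x y ^ γ := fun y =>
    sum_nonneg fun x _ => mul_nonneg (hQ.1 x) (rpow_nonneg ((hW x).1 y) γ)
  obtain ⟨x₀, hx₀⟩ := hQ.exists_pos
  obtain ⟨y₀, hy₀⟩ := (hW x₀).exists_pos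
  have hA₀ : 0 < ∑ x, Q x * W x y₀ ^ γ :=
    sum_pos' (fun x _ => mul_nonneg (hQ.1 x) (rpow_nonneg ((hW x).1 y₀) γ))
      ⟨x₀, mem_univ _, mul_pos hx₀ (rpow_pos_of_pos hy₀ γ)⟩
  exact sum_pos' (fun y _ => rpow_nonneg (hA y) _) ⟨y₀, mem_univ _, rpow_pos_of_pos hA₀ _⟩

theorem sum_rpow_one_sub_mul_sum_eq (Q : X → ℝ) {r : Y → ℝ} (hW : ∀ x y, 0 ≤ W x y)
    (hr : ∀ y, 0 ≤ r y) {γ : ℝ} (hγ0 : γ ≠ 0) (hγ1 : γ ≠ 1) :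
    ∑ y, r y ^ (1 - γ) * ∑ x, Q x * W x y ^ γ
      = ∑ p : X × Y, Q p.1 * W p.1 p.2 * (W p.1 p.2 / r p.2) ^ (γ - 1) := by
  rw [Fintype.sum_prod_type, sum_comm]
  refine sum_congr rfl fun y _ => ?_
  rw [mul_sum]
  refine sum_congr rfl fun x _ => ?_
  rw [mul_left_comm, rpow_one_sub_mul_rpow_eq (hr y) (hW x y) hγ0 hγ1, mul_assoc]

theorem sibsonMI_le_sibsonMI_of_le (hQ : IsPMF Q) (hW : ∀ x, IsPMF (W x)) {α β : ℝ} (hα : 1 < α)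
    (hαβ : α ≤ β) : sibsonMI α Q W ≤ sibsonMI β Q W := by
  have hβ : 1 < β := hα.trans_le hαβ
  have hW0 : ∀ x y, 0 ≤ W x y := fun x => (hW x).1
  set A : ℝ → Y → ℝ := fun γ y => ∑ x, Q x * W x y ^ γ
  have hA0 : ∀ γ y, 0 ≤ A γ y := fun γ y =>
    sum_nonneg fun x _ => mul_nonneg (hQ.1 x) (rpow_nonneg (hW0 x y) γ)
  set S : ℝ → ℝ := fun γ => ∑ y, A γ y ^ (1 / γ)
  have hS : ∀ γ, 0 < S γ := fun γ => sum_rpow_sum_mul_rpow_pos hQ hW γ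
  -- The output distribution optimal at order `β`: Hölder against it bounds the order-`α` sum,
  -- and at order `β` it gives equality.
  set r : Y → ℝ := fun y => A β y ^ (1 / β) / S β
  have hr : IsPMF r := ⟨fun y => div_nonneg (rpow_nonneg (hA0 β y) _) (hS β).le,
    by simp only [r, ← sum_div]; exact div_self (hS β).ne'⟩
  have hsupp : ∀ y, r y = 0 → A α y = 0 := by
    intro y hy
    have hAβ : A β y = 0 :=
      (rpow_eq_zero (hA0 β y) (by positivity)).1 ((div_eq_zero_iff.1 hy).resolve_right (hS β).ne')
    simp only [A, sum_mul_rpow_eq_zero_iff hQ.1 (hW0 · y) (by linarith : (0:ℝ) < β)] at hAβ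
    simpa only [A, sum_mul_rpow_eq_zero_iff hQ.1 (hW0 · y) (by linarith : (0:ℝ) < α)]
  set T : ℝ → ℝ := fun γ => ∑ y, r y ^ (1 - γ) * A γ y
  have holder : S α ^ α ≤ T α := sum_rpow_one_div_rpow_le hα.le (hA0 α) hr hsupp
  have tilt : T β = S β ^ β :=
    sum_div_rpow_one_sub_mul_eq (by positivity) (hA0 β) (hS β)
  -- `T γ = exp ((γ - 1) D_γ(Q ∘ W ‖ Q × r))`, and Rényi divergence is monotone in its order.
  have mean : T α ^ (1 / (α - 1)) ≤ T β ^ (1 / (β - 1)) := by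
    simp only [T, A, sum_rpow_one_sub_mul_sum_eq Q hW0 hr.1 (by positivity : α ≠ 0) hα.ne',
      sum_rpow_one_sub_mul_sum_eq Q hW0 hr.1 (by positivity : β ≠ 0) hβ.ne']
    exact rpow_sum_mul_rpow_le (hQ.joint hW) (fun p => div_nonneg (hW0 _ _) (hr.1 _))
      (sub_pos.2 hα) (by linarith)
  have hSα := hS α
  have hTα : 0 < T α := (rpow_pos_of_pos hSα α).trans_le holder
  calc sibsonMI α Q W = 1 / (α - 1) * log (S α ^ α) := by
        rw [log_rpow hSα]; unfold sibsonMI; ring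
    _ ≤ 1 / (α - 1) * log (T α) := by gcongr
    _ = log (T α ^ (1 / (α - 1))) := (log_rpow hTα _).symm
    _ ≤ log (T β ^ (1 / (β - 1))) := log_le_log (rpow_pos_of_pos hTα _) mean
    _ = sibsonMI β Q W := by
        rw [tilt, ← rpow_mul (hS β).le, log_rpow (hS β)]
        unfold sibsonMI; ring

theorem maxAlphaLeakage_eq_iSup (γ : ℝ) :
    maxAlphaLeakage γ W = ⨆ Q : {Q : X → ℝ // IsPMF Q}, sibsonMI γ Q.1 W := by
  rw [maxAlphaLeakage, iSup]
  congr 1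
  ext v
  simp [eq_comm]

theorem bddAbove_range_sibsonMI (hW : ∀ x, IsPMF (W x)) {β : ℝ} (hβ : 1 ≤ β) :
    BddAbove (Set.range fun Q : {Q : X → ℝ // IsPMF Q} => sibsonMI β Q.1 W) := by
  refine ⟨β / (β - 1) * log (∑ y, (∑ x, W x y ^ β) ^ (1 / β)), ?_⟩
  rintro _ ⟨⟨Q, hQ⟩, rfl⟩
  have hle : ∑ y, (∑ x, Q x * W x y ^ β) ^ (1 / β) ≤ ∑ y, (∑ x, W x y ^ β) ^ (1 / β) := by
    gcongr with y _ x
    · exact sum_nonneg fun x _ => mul_nonneg (hQ.1 x) (rpow_nonneg ((hW x).1 y) β)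
    · exact mul_le_of_le_one_left (rpow_nonneg ((hW x).1 y) β) (hQ.le_one x)
  exact mul_le_mul_of_nonneg_left (log_le_log (sum_rpow_sum_mul_rpow_pos hQ hW β) hle)
    (div_nonneg (by linarith) (by linarith))

end Channel

theorem maxAlphaLeakage_mono_general {X Y : Type}
    [Fintype X] [Fintype Y]
    (W : X → Y → ℝ) (hW : ∀ x, IsPMF (W x))
    (α β : ℝ) (hα : 1 < α) (hαβ : α ≤ β) :
    maxAlphaLeakage α W ≤ maxAlphaLeakage β W := by
  rw [maxAlphaLeakage_eq_iSup, maxAlphaLeakage_eq_iSup]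
  exact ciSup_mono (bddAbove_range_sibsonMI hW (hα.le.trans hαβ)) fun Q =>
    sibsonMI_le_sibsonMI_of_le Q.2 hW hα hαβ

/-- the maximal α-leakage is non-decreasing in α. -/
theorem maxAlphaLeakage_mono {X Y : Type}
    [Fintype X] [Fintype Y] [Nonempty X] [Nonempty Y]
    (W : X → Y → ℝ) (hW : ∀ x, IsPMF (W x))
    (α β : ℝ) (hα : 1 < α) (hαβ : α ≤ β) :
    maxAlphaLeakage α W ≤ maxAlphaLeakage β W :=
  maxAlphaLeakage_mono_general W hW α β hα hαβ
end

section
/- Let 𝒳, 𝒴 be nonempty finite sets, α ∈ (1,∞), and W a channel from 𝒳 to 𝒴. Then sup over probability mass functions Q on 𝒳 of I_α^S(Q,W) is ≥ 0, and it equals 0 if and only if W(y|x) does not depend on x (i.e., all rows of W are identical, so that X and Y are independent under any input distribution). -/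
open Real BigOperators

section Aux

variable {X Y : Type} [Fintype X] [Fintype Y] {α : ℝ} {Q : X → ℝ} {W : X → Y → ℝ}

lemma sibson_inner_nonneg (hQ : IsPMF Q) (hW : ∀ x, IsPMF (W x)) (y : Y) :
    0 ≤ ∑ x, Q x * W x y ^ α :=
  Finset.sum_nonneg fun x _ => mul_nonneg (hQ.1 x) (Real.rpow_nonneg ((hW x).1 y) α)

lemma sibson_col_le_term (hα : 1 < α) (hQ : IsPMF Q) (hW : ∀ x, IsPMF (W x)) (y : Y) :
    ∑ x, Q x * W x y ≤ (∑ x, Q x * W x y ^ α) ^ (1 / α) := by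
  have hα0 : (0:ℝ) < α := lt_trans one_pos hα
  have hc : 0 ≤ ∑ x, Q x * W x y :=
    Finset.sum_nonneg fun x _ => mul_nonneg (hQ.1 x) ((hW x).1 y)
  have hJ : (∑ x, Q x * W x y) ^ α ≤ ∑ x, Q x * W x y ^ α :=
    Real.rpow_arith_mean_le_arith_mean_rpow Finset.univ Q (fun x => W x y)
      (fun x _ => hQ.1 x) hQ.2 (fun x _ => (hW x).1 y) (le_of_lt hα)
  calc ∑ x, Q x * W x y
      = ((∑ x, Q x * W x y) ^ α) ^ (1/α) := by
        rw [← Real.rpow_mul hc, mul_one_div_cancel hα0.ne', Real.rpow_one]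
    _ ≤ (∑ x, Q x * W x y ^ α) ^ (1/α) :=
        Real.rpow_le_rpow (Real.rpow_nonneg hc α) hJ (by positivity)

lemma sibson_sum_cols_eq_one (hQ : IsPMF Q) (hW : ∀ x, IsPMF (W x)) :
    ∑ y, ∑ x, Q x * W x y = 1 := by
  rw [Finset.sum_comm]
  calc ∑ x, ∑ y, Q x * W x y = ∑ x, Q x * ∑ y, W x y := by
        simp [Finset.mul_sum]
    _ = 1 := by simp only [(fun x => (hW x).2)]; simpa using hQ.2

lemma sibson_one_le_sum (hα : 1 < α) (hQ : IsPMF Q) (hW : ∀ x, IsPMF (W x)) :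
    1 ≤ ∑ y, (∑ x, Q x * W x y ^ α) ^ (1 / α) := by
  calc (1:ℝ) = ∑ y, ∑ x, Q x * W x y := (sibson_sum_cols_eq_one hQ hW).symm
    _ ≤ _ := Finset.sum_le_sum fun y _ => sibson_col_le_term hα hQ hW y

lemma sibsonMI_nonneg (hα : 1 < α) (hQ : IsPMF Q) (hW : ∀ x, IsPMF (W x)) :
    0 ≤ sibsonMI α Q W := by
  have h1 : (0:ℝ) ≤ α / (α - 1) := by
    apply div_nonneg <;> linarith
  exact mul_nonneg h1 (Real.log_nonneg (sibson_one_le_sum hα hQ hW))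

lemma sibsonMI_le_bound (hα : 1 < α) (hQ : IsPMF Q) (hW : ∀ x, IsPMF (W x)) :
    sibsonMI α Q W ≤ (α / (α - 1)) * Real.log (Fintype.card Y) := by
  have hα0 : (0:ℝ) < α := lt_trans one_pos hα
  have hterm : ∀ y : Y, (∑ x, Q x * W x y ^ α) ^ (1 / α) ≤ 1 := by
    intro y
    have hle1 : ∑ x, Q x * W x y ^ α ≤ 1 := by
      calc ∑ x, Q x * W x y ^ α ≤ ∑ x, Q x * 1 := by
            apply Finset.sum_le_sum
            intro x _
            have hWle1 : W x y ≤ 1 := by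
              have := (hW x).2
              calc W x y ≤ ∑ y', W x y' :=
                    Finset.single_le_sum (fun y' _ => (hW x).1 y') (Finset.mem_univ y)
                _ = 1 := this
            exact mul_le_mul_of_nonneg_left
              (Real.rpow_le_one ((hW x).1 y) hWle1 hα0.le) (hQ.1 x)
        _ = 1 := by simpa using hQ.2
    exact Real.rpow_le_one (sibson_inner_nonneg hQ hW y) hle1 (by positivity)
  have hsum : ∑ y, (∑ x, Q x * W x y ^ α) ^ (1 / α) ≤ (Fintype.card Y : ℝ) := by
    calc ∑ y, (∑ x, Q x * W x y ^ α) ^ (1 / α) ≤ ∑ _y : Y, (1:ℝ) :=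
          Finset.sum_le_sum fun y _ => hterm y
      _ = (Fintype.card Y : ℝ) := by simp
  have hlog : Real.log (∑ y, (∑ x, Q x * W x y ^ α) ^ (1 / α))
      ≤ Real.log (Fintype.card Y) := by
    apply Real.log_le_log _ hsum
    linarith [sibson_one_le_sum hα hQ hW]
  have h1 : (0:ℝ) ≤ α / (α - 1) := by apply div_nonneg <;> linarith
  exact mul_le_mul_of_nonneg_left hlog h1

lemma uniform_isPMF [Nonempty X] : IsPMF (fun _ : X => (Fintype.card X : ℝ)⁻¹) := by
  have hc : (0:ℝ) < Fintype.card X := by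
    exact_mod_cast Fintype.card_pos
  constructor
  · intro x; positivity
  · simp [Finset.sum_const, mul_comm]

end Aux

/-- the maximal α-leakage is nonnegative, and it is zero if and
only if all rows of the channel are identical (i.e. `X` and `Y` independent). -/
theorem maxAlphaLeakage_nonneg_and_zero_iff {X Y : Type}
    [Fintype X] [Fintype Y] [Nonempty X] [Nonempty Y]
    (α : ℝ) (hα : 1 < α)
    (W : X → Y → ℝ) (hW : ∀ x, IsPMF (W x)) :
    0 ≤ maxAlphaLeakage α W ∧
    (maxAlphaLeakage α W = 0 ↔ ∀ x x' y, W x y = W x' y) := by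
  have hα0 : (0:ℝ) < α := lt_trans one_pos hα
  set S := {v : ℝ | ∃ Q : X → ℝ, IsPMF Q ∧ v = sibsonMI α Q W} with hS
  set Q₀ : X → ℝ := fun _ => (Fintype.card X : ℝ)⁻¹ with hQ₀
  have hQ₀pmf : IsPMF Q₀ := uniform_isPMF
  have hmem₀ : sibsonMI α Q₀ W ∈ S := ⟨Q₀, hQ₀pmf, rfl⟩
  have hbdd : BddAbove S := by
    refine ⟨(α / (α - 1)) * Real.log (Fintype.card Y), ?_⟩
    rintro v ⟨Q, hQ, rfl⟩
    exact sibsonMI_le_bound hα hQ hW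
  have hnonneg : 0 ≤ maxAlphaLeakage α W := by
    calc (0:ℝ) ≤ sibsonMI α Q₀ W := sibsonMI_nonneg hα hQ₀pmf hW
      _ ≤ maxAlphaLeakage α W := le_csSup hbdd hmem₀
  refine ⟨hnonneg, ?_, ?_⟩
  · -- sup = 0 → rows identical
    intro hzero x x' y0
    by_contra hne
    -- strict Jensen at column y0 with the uniform distribution
    have hQpos : ∀ z : X, 0 < Q₀ z := by
      intro z
      have hc : (0:ℝ) < Fintype.card X := by exact_mod_cast Fintype.card_pos
      simp only [hQ₀]
      positivity
    have hstrict : (∑ z, Q₀ z * W z y0) ^ α < ∑ z, Q₀ z * W z y0 ^ α := by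
      have := (strictConvexOn_rpow hα).map_sum_lt
        (t := Finset.univ) (w := Q₀) (p := fun z => W z y0)
        (fun z _ => hQpos z) hQ₀pmf.2 (fun z _ => (hW z).1 y0)
        ⟨x, Finset.mem_univ x, x', Finset.mem_univ x', hne⟩
      simpa [smul_eq_mul] using this
    have hterm : ∑ z, Q₀ z * W z y0 < (∑ z, Q₀ z * W z y0 ^ α) ^ (1/α) := by
      have hc : 0 ≤ ∑ z, Q₀ z * W z y0 :=
        Finset.sum_nonneg fun z _ => mul_nonneg (hQ₀pmf.1 z) ((hW z).1 y0)
      calc ∑ z, Q₀ z * W z y0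
          = ((∑ z, Q₀ z * W z y0) ^ α) ^ (1/α) := by
            rw [← Real.rpow_mul hc, mul_one_div_cancel hα0.ne', Real.rpow_one]
        _ < (∑ z, Q₀ z * W z y0 ^ α) ^ (1/α) :=
            Real.rpow_lt_rpow (Real.rpow_nonneg hc α) hstrict (by positivity)
    have hsum : 1 < ∑ y, (∑ z, Q₀ z * W z y ^ α) ^ (1/α) := by
      calc (1:ℝ) = ∑ y, ∑ z, Q₀ z * W z y := (sibson_sum_cols_eq_one hQ₀pmf hW).symm
        _ < _ := Finset.sum_lt_sum (fun y _ => sibson_col_le_term hα hQ₀pmf hW y)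
            ⟨y0, Finset.mem_univ y0, hterm⟩
    have hpos : 0 < sibsonMI α Q₀ W := by
      have h1 : (0:ℝ) < α / (α - 1) := by
        apply div_pos <;> linarith
      exact mul_pos h1 (Real.log_pos hsum)
    have : sibsonMI α Q₀ W ≤ 0 := hzero ▸ le_csSup hbdd hmem₀
    linarith
  · -- rows identical → sup = 0
    intro hrows
    have hzero : ∀ v ∈ S, v = 0 := by
      rintro v ⟨Q, hQ, rfl⟩
      set x₀ : X := Classical.arbitrary X
      have hinner : ∀ y, ∑ x, Q x * W x y ^ α = W x₀ y ^ α := by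
        intro y
        calc ∑ x, Q x * W x y ^ α = ∑ x, Q x * W x₀ y ^ α := by
              apply Finset.sum_congr rfl
              intro x _
              rw [hrows x x₀ y]
          _ = (∑ x, Q x) * W x₀ y ^ α := by rw [Finset.sum_mul]
          _ = W x₀ y ^ α := by rw [hQ.2, one_mul]
      have hsum : ∑ y, (∑ x, Q x * W x y ^ α) ^ (1/α) = 1 := by
        calc ∑ y, (∑ x, Q x * W x y ^ α) ^ (1/α)
            = ∑ y, W x₀ y := by
              apply Finset.sum_congr rfl
              intro y _
              rw [hinner y, ← Real.rpow_mul ((hW x₀).1 y),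
                mul_one_div_cancel hα0.ne', Real.rpow_one]
          _ = 1 := (hW x₀).2
      simp only [sibsonMI]
      rw [hsum, Real.log_one, mul_zero]
    have hne : S.Nonempty := ⟨_, hmem₀⟩
    have hle : maxAlphaLeakage α W ≤ 0 :=
      csSup_le hne fun v hv => le_of_eq (hzero v hv)
    linarith
end
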